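/- arXiv:2003.05977 — 2 statements merged into one kernel-verified Lean document; each statement's English description precedes it below -/
import Mathlib

section
/- Let V be a real inner product space with a subspace W, and let J : V → V satisfy J² = -I and ⟨JX,JY⟩ = ⟨X,Y⟩. Write JX = PX + FX for X ∈ W, where PX is the orthogonal projection of JX onto W and FX onto W⊥. If P² = -(cos²θ)·I on W for some real θ, then ⟨PX, PY⟩ = (cos²θ)⟨X, Y⟩ for all X, Y ∈ W. -/
/-! Since `J` is orthogonal with `J² = -1` it is skew-adjoint, and since `F x ⊥ W` the tangential
part `P` inherits this on `W`. Hence `⟪P x, P y⟫ = -⟪x, P² y⟫ = cos² θ ⟪x, y⟫`. -/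

open scoped RealInnerProductSpace

section

variable {V : Type*} [NormedAddCommGroup V] [InnerProductSpace ℝ V]

theorem inner_apply_left_eq_neg_inner_apply_right {J : V → V} (hJ2 : ∀ x, J (J x) = -x)
    (hJi : ∀ x y, ⟪J x, J y⟫ = ⟪x, y⟫) (a b : V) : ⟪J a, b⟫ = -⟪a, J b⟫ := by
  have h := hJi a (J b)
  rw [hJ2, inner_neg_right] at h
  linarith

variable {J : V → V} {W : Submodule ℝ V} {P : W → W} {F : W → Wᗮ}

theorem inner_tangential_left_eq_inner_apply_left
    (hdec : ∀ x : W, J (x : V) = (P x : V) + (F x : V)) (x y : W) :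
    ⟪(P x : V), (y : V)⟫ = ⟪J x, (y : V)⟫ := by
  rw [hdec x, inner_add_left, Submodule.inner_left_of_mem_orthogonal y.2 (F x).2, add_zero]

theorem inner_tangential_left_eq_neg_inner_tangential_right (hJ2 : ∀ x, J (J x) = -x)
    (hJi : ∀ x y, ⟪J x, J y⟫ = ⟪x, y⟫)
    (hdec : ∀ x : W, J (x : V) = (P x : V) + (F x : V)) (x y : W) :
    ⟪(P x : V), (y : V)⟫ = -⟪(x : V), (P y : V)⟫ := by
  rw [inner_tangential_left_eq_inner_apply_left hdec,
    inner_apply_left_eq_neg_inner_apply_right hJ2 hJi, real_inner_comm,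
    ← inner_tangential_left_eq_inner_apply_left hdec, real_inner_comm]

end

theorem stmt1 {V : Type*} [NormedAddCommGroup V] [InnerProductSpace ℝ V]
    (J : V →ₗ[ℝ] V) (hJ2 : ∀ x, J (J x) = -x)
    (hJi : ∀ x y, ⟪J x, J y⟫ = ⟪x, y⟫)
    (W : Submodule ℝ V) (P : W →ₗ[ℝ] W) (F : W →ₗ[ℝ] Wᗮ)
    (hdec : ∀ x : W, J (x : V) = (P x : V) + (F x : V))
    (θ : ℝ) (hP2 : ∀ x : W, P (P x) = -(Real.cos θ ^ 2) • x) :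
    ∀ x y : W, ⟪(P x : V), (P y : V)⟫ = Real.cos θ ^ 2 * ⟪(x : V), (y : V)⟫ := by
  intro x y
  rw [inner_tangential_left_eq_neg_inner_tangential_right hJ2 hJi hdec, hP2,
    Submodule.coe_smul, inner_smul_right, neg_mul, neg_neg]
end

section
/- Let W be a real inner product space, θ real with sin θ ≠ 0, and suppose β : W × W → W is totally symmetric (⟨β(X,Y),Z⟩ = ⟨β(X,Z),Y⟩), P skew-adjoint with P² = -(cos²θ)I, and e₁ a unit vector with β(e₁,e₁) = μ₁e₁, β(e₁,eᵢ) = μᵢeᵢ for an orthonormal basis e₁,...,eₙ. If the identity ⟨β(X,Z),β(Y,PW)⟩ - ⟨β(X,PW),β(Y,Z)⟩ + ⟨β(X,W),Pβ(Y,Z)⟩ - ⟨β(Y,W),Pβ(X,Z)⟩ + (c/4)sin⁴θ(⟨X,PZ⟩⟨Y,W⟩ - ⟨Y,PZ⟩⟨X,W⟩ + 2⟨X,PY⟩⟨Z,W⟩) = 0 holds for all X,Y,Z,W, then for each i > 1: (μᵢ² + μ₁μᵢ + (3c/4)sin⁴θ)·⟨eᵢ, Pe₁⟩ = 0. -/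
open scoped RealInnerProductSpace

section SkewAdjoint

variable {E : Type*} [NormedAddCommGroup E] [InnerProductSpace ℝ E]
  {P : E →ₗ[ℝ] E}

lemma inner_apply_self_eq_zero_of_skew (hskew : ∀ x y, ⟪P x, y⟫ = -⟪x, P y⟫) (x : E) :
    ⟪x, P x⟫ = 0 := by
  have h := hskew x x
  rw [real_inner_comm] at h
  linarith

lemma inner_apply_swap_of_skew (hskew : ∀ x y, ⟪P x, y⟫ = -⟪x, P y⟫) (x y : E) :
    ⟪x, P y⟫ = -⟪y, P x⟫ := by
  rw [real_inner_comm, hskew]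

end SkewAdjoint

lemma master_expr_at_eigenvectors {E : Type*} [NormedAddCommGroup E] [InnerProductSpace ℝ E]
    {P : E →ₗ[ℝ] E} (hskew : ∀ x y, ⟪P x, y⟫ = -⟪x, P y⟫)
    {β : E →ₗ[ℝ] E →ₗ[ℝ] E} (hsymm : ∀ x y, β x y = β y x)
    (htot : ∀ x y z, ⟪β x y, z⟫ = ⟪β x z, y⟫)
    {u v : E} {a b : ℝ} (hu : ‖u‖ = 1) (hvu : ⟪v, u⟫ = 0)
    (hβuu : β u u = a • u) (hβuv : β u v = b • v) (κ : ℝ) :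
    ⟪β u u, β v (P u)⟫ - ⟪β u (P u), β v u⟫ + ⟪β u u, P (β v u)⟫ - ⟪β v u, P (β u u)⟫
      + κ * (⟪u, P u⟫ * ⟪v, u⟫ - ⟪v, P u⟫ * ⟪u, u⟫ + 2 * ⟪u, P v⟫ * ⟪u, u⟫)
      = -(b ^ 2 + a * b + 3 * κ) * ⟪v, P u⟫ := by
  have hβvu : β v u = b • v := by rw [hsymm, hβuv]
  have huu : ⟪u, u⟫ = 1 := by rw [real_inner_self_eq_norm_sq, hu, one_pow]
  have h₁ : ⟪β u u, β v (P u)⟫ = a * (b * ⟪v, P u⟫) := by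
    rw [hβuu, real_inner_smul_left, real_inner_comm, htot, hβvu, real_inner_smul_left]
  have h₂ : ⟪β u (P u), β v u⟫ = b * (b * ⟪v, P u⟫) := by
    rw [hβvu, real_inner_smul_right, htot, hβuv, real_inner_smul_left]
  rw [h₁, h₂, hβvu, hβuu, map_smul, map_smul, real_inner_smul_left, real_inner_smul_right,
    real_inner_smul_left, real_inner_smul_right, inner_apply_swap_of_skew hskew u v,
    inner_apply_self_eq_zero_of_skew hskew, hvu, huu]
  ring

theorem stmt19_general {E : Type*} [NormedAddCommGroup E] [InnerProductSpace ℝ E]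
    (θ c : ℝ)
    (P : E →ₗ[ℝ] E) (hskew : ∀ x y, ⟪P x, y⟫ = -⟪x, P y⟫)
    (β : E →ₗ[ℝ] E →ₗ[ℝ] E) (hsymm : ∀ x y, β x y = β y x)
    (htot : ∀ x y z, ⟪β x y, z⟫ = ⟪β x z, y⟫)
    {n : ℕ} [NeZero n] (e : Fin n → E) (hON : Orthonormal ℝ e)
    (μ : Fin n → ℝ) (heig : ∀ i, β (e 0) (e i) = μ i • e i)
    (hmaster : ∀ X Y Z W : E,
      ⟪β X Z, β Y (P W)⟫ - ⟪β X (P W), β Y Z⟫ + ⟪β X W, P (β Y Z)⟫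
        - ⟪β Y W, P (β X Z)⟫
        + (c / 4) * Real.sin θ ^ 4 * (⟪X, P Z⟫ * ⟪Y, W⟫
          - ⟪Y, P Z⟫ * ⟪X, W⟫ + 2 * ⟪X, P Y⟫ * ⟪Z, W⟫) = 0) :
    ∀ i : Fin n, i ≠ 0 →
      (μ i ^ 2 + μ 0 * μ i + (3 * c / 4) * Real.sin θ ^ 4) * ⟪e i, P (e 0)⟫ = 0 := by
  intro i hi
  have h := hmaster (e 0) (e i) (e 0) (e 0)
  rw [master_expr_at_eigenvectors hskew hsymm htot (hON.1 0) (hON.2 hi) (heig 0) (heig i)] at h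
  linear_combination -h

theorem stmt19 {E : Type*} [NormedAddCommGroup E] [InnerProductSpace ℝ E]
    (θ c : ℝ) (hθ : Real.sin θ ≠ 0)
    (P : E →ₗ[ℝ] E) (hskew : ∀ x y, ⟪P x, y⟫ = -⟪x, P y⟫)
    (hP2 : ∀ x, P (P x) = -(Real.cos θ ^ 2) • x)
    (β : E →ₗ[ℝ] E →ₗ[ℝ] E) (hsymm : ∀ x y, β x y = β y x)
    (htot : ∀ x y z, ⟪β x y, z⟫ = ⟪β x z, y⟫)
    {n : ℕ} [NeZero n] (e : Fin n → E) (hON : Orthonormal ℝ e)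
    (μ : Fin n → ℝ) (heig : ∀ i, β (e 0) (e i) = μ i • e i)
    (hmaster : ∀ X Y Z W : E,
      ⟪β X Z, β Y (P W)⟫ - ⟪β X (P W), β Y Z⟫ + ⟪β X W, P (β Y Z)⟫
        - ⟪β Y W, P (β X Z)⟫
        + (c / 4) * Real.sin θ ^ 4 * (⟪X, P Z⟫ * ⟪Y, W⟫
          - ⟪Y, P Z⟫ * ⟪X, W⟫ + 2 * ⟪X, P Y⟫ * ⟪Z, W⟫) = 0) :
    ∀ i : Fin n, i ≠ 0 →
      (μ i ^ 2 + μ 0 * μ i + (3 * c / 4) * Real.sin θ ^ 4) * ⟪e i, P (e 0)⟫ = 0 :=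
  stmt19_general θ c P hskew β hsymm htot e hON μ heig hmaster
end
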